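/- arXiv:2301.05512 — 2 statements merged into one kernel-verified Lean document; each statement's English description precedes it below -/
import Mathlib

section
/- Let X₁, …, Xₙ be identically distributed integrable real random variables with distribution μ, and let μₙ be the empirical measure. For M > 0 define X_i' = (X_i ∧ M) ∨ (−M) and X_i'' = X_i − X_i'. Let F_k'(t) = (1/k)∑_{j=1}^k 1_{X_j' ≤ t} and F'(t) = P(X₁' ≤ t). Then for every n, max_{1≤k≤n} k·W₁(μ_k, μ) ≤ max_{1≤k≤n} k·∫_ℝ |F_k'(t) − F'(t)| dt + ∑_{i=1}^n (|X_i''| + E|X_i''|). -/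
open MeasureTheory

/-- The Kantorovich (Wasserstein-1) distance between two measures on `ℝ`. -/
noncomputable def W1 (μ ν : Measure ℝ) : ℝ :=
  ⨅ π : {π : Measure (ℝ × ℝ) // π.map Prod.fst = μ ∧ π.map Prod.snd = ν},
    ∫ p, |p.1 - p.2| ∂(π : Measure (ℝ × ℝ))

/-- The empirical measure `(1/k) ∑_{j=1}^k δ_{X_j(ω)}`. -/
noncomputable def empiricalMeasure {Ω : Type*} [MeasurableSpace Ω] (k : ℕ)
    (X : ℕ → Ω → ℝ) (ω : Ω) : Measure ℝ :=
  (k : ENNReal)⁻¹ • ∑ j ∈ Finset.Icc 1 k, Measure.dirac (X j ω)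

/-- Truncation at level `M` : `(x ∧ M) ∨ (-M)`. -/
def trunc (M x : ℝ) : ℝ := max (min x M) (-M)

/-!
Write `F_ν(t) = ν (-∞, t]` and `d(ν, ν') = ∫ |F_ν - F_ν'| dt`. For random variables `f, g` on a
finite measure space `(α, ρ)`, Tonelli gives `∫ ρ ({f ≤ t} ∆ {g ≤ t}) dt = E_ρ |f - g|`, whence
`d(f_* ρ, g_* ρ) ≤ E_ρ |f - g|`, with equality when the two events are nested for every `t`. The
quantile coupling `u ↦ (F_μ⁻¹ u, F_ν⁻¹ u)` of Lebesgue measure on `(0, 1)` is of this kind, so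
`W₁ ≤ d`. Going from `μ_k` to `μ` through the truncated laws `μ'_k` and `μ'`, the couplings
`j ↦ (X_j, X_j')` and `x ↦ (x, x')` bound the outer two steps by `(1/k) ∑ |X_j''|` and `E |X''|`,
while `d(μ'_k, μ')` is finite since both laws live on `[-|M|, |M|]`. Multiplying by `k` and
enlarging the sums to `j ≤ n` bounds each term of the maximum.
-/

open ProbabilityTheory Set
open scoped ENNReal symmDiff

noncomputable def cdfDist (μ ν : Measure ℝ) : ℝ≥0∞ :=
  ∫⁻ t, ENNReal.ofReal |μ.real (Iic t) - ν.real (Iic t)|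

section CdfDist

variable {μ ν : Measure ℝ}

lemma measurable_measureReal_Iic (μ : Measure ℝ) [IsFiniteMeasure μ] :
    Measurable fun t => μ.real (Iic t) :=
  Monotone.measurable fun _ _ h => measureReal_mono (Iic_subset_Iic.2 h)

lemma cdfDist_triangle (μ ν ρ : Measure ℝ) [IsFiniteMeasure μ] [IsFiniteMeasure ν] :
    cdfDist μ ρ ≤ cdfDist μ ν + cdfDist ν ρ := by
  rw [cdfDist, cdfDist, cdfDist, ← lintegral_add_left (f := fun t => ENNReal.ofReal
    |μ.real (Iic t) - ν.real (Iic t)|) ((measurable_measureReal_Iic μ).sub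
      (measurable_measureReal_Iic ν)).abs.ennreal_ofReal]
  refine lintegral_mono fun t => ?_
  rw [← ENNReal.ofReal_add (abs_nonneg _) (abs_nonneg _)]
  exact ENNReal.ofReal_le_ofReal (abs_sub_le _ _ _)

lemma toReal_cdfDist [IsFiniteMeasure μ] [IsFiniteMeasure ν] :
    (cdfDist μ ν).toReal = ∫ t, |μ.real (Iic t) - ν.real (Iic t)| :=
  (integral_eq_lintegral_of_nonneg_ae (ae_of_all _ fun _ => abs_nonneg _)
    ((measurable_measureReal_Iic μ).sub
      (measurable_measureReal_Iic ν)).abs.aestronglyMeasurable).symm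

lemma measureReal_Iic_of_ae_mem_Icc [IsProbabilityMeasure μ] {a b t : ℝ}
    (hμ : ∀ᵐ x ∂μ, x ∈ Icc a b) (ht : t ∉ Ico a b) :
    μ.real (Iic t) = if t < a then 0 else 1 := by
  split_ifs with hta
  · refine (measureReal_eq_zero_iff).2 (measure_mono_null ?_ (ae_iff.1 hμ))
    exact fun x hx hab => hta.not_ge (hab.1.trans hx)
  · have htb : b ≤ t := by simpa [mem_Ico, not_lt.1 hta] using ht
    rw [measureReal_def, (prob_compl_eq_zero_iff measurableSet_Iic).1 ?_, ENNReal.toReal_one]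
    refine measure_mono_null ?_ (ae_iff.1 hμ)
    exact fun x hx hab => hx (hab.2.trans htb)

lemma cdfDist_le_of_ae_mem_Icc [IsProbabilityMeasure μ] [IsProbabilityMeasure ν] {a b : ℝ}
    (hμ : ∀ᵐ x ∂μ, x ∈ Icc a b) (hν : ∀ᵐ x ∂ν, x ∈ Icc a b) :
    cdfDist μ ν ≤ ENNReal.ofReal (b - a) := by
  calc cdfDist μ ν ≤ ∫⁻ t, (Ico a b).indicator 1 t := lintegral_mono fun t => ?_
    _ = ENNReal.ofReal (b - a) := by
      rw [lintegral_indicator_one measurableSet_Ico, Real.volume_Ico]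
  by_cases ht : t ∈ Ico a b
  · rw [indicator_of_mem ht, Pi.one_apply, ← ENNReal.ofReal_one]
    refine ENNReal.ofReal_le_ofReal (abs_sub_le_iff.2 ⟨?_, ?_⟩) <;>
      linarith [measureReal_nonneg (μ := μ) (s := Iic t), measureReal_le_one (μ := μ) (s := Iic t),
        measureReal_nonneg (μ := ν) (s := Iic t), measureReal_le_one (μ := ν) (s := Iic t)]
  · simp [measureReal_Iic_of_ae_mem_Icc hμ ht, measureReal_Iic_of_ae_mem_Icc hν ht]

end CdfDist

lemma volume_Ici_symmDiff_Ici (a b : ℝ) : volume (Ici a ∆ Ici b) = ENNReal.ofReal |a - b| := by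
  rw [measure_symmDiff_eq measurableSet_Ici.nullMeasurableSet measurableSet_Ici.nullMeasurableSet,
    Ici_sdiff_Ici, Ici_sdiff_Ici, Real.volume_Ico, Real.volume_Ico]
  rcases le_total a b with h | h
  · rw [ENNReal.ofReal_of_nonpos (sub_nonpos.2 h), add_zero, abs_sub_comm,
      abs_of_nonneg (sub_nonneg.2 h)]
  · rw [ENNReal.ofReal_of_nonpos (sub_nonpos.2 h), zero_add, abs_of_nonneg (sub_nonneg.2 h)]

section Coupling

variable {α : Type*} [MeasurableSpace α]

lemma lintegral_measure_symmDiff_setOf_le (ρ : Measure α) [SFinite ρ] {f g : α → ℝ}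
    (hf : Measurable f) (hg : Measurable g) :
    ∫⁻ t, ρ ({a | f a ≤ t} ∆ {a | g a ≤ t}) = ∫⁻ a, ENNReal.ofReal |f a - g a| ∂ρ := by
  have hS : MeasurableSet ({p : ℝ × α | f p.2 ≤ p.1} ∆ {p | g p.2 ≤ p.1}) :=
    (measurableSet_le (hf.comp measurable_snd) measurable_fst).symmDiff
      (measurableSet_le (hg.comp measurable_snd) measurable_fst)
  calc ∫⁻ t, ρ ({a | f a ≤ t} ∆ {a | g a ≤ t}) = (volume.prod ρ) _ :=
        (Measure.prod_apply hS).symm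
    _ = ∫⁻ a, volume (Ici (f a) ∆ Ici (g a)) ∂ρ := Measure.prod_apply_symm hS
    _ = ∫⁻ a, ENNReal.ofReal |f a - g a| ∂ρ := by simp_rw [volume_Ici_symmDiff_Ici]

lemma cdfDist_map_le (ρ : Measure α) [IsFiniteMeasure ρ] {f g : α → ℝ}
    (hf : Measurable f) (hg : Measurable g) :
    cdfDist (ρ.map f) (ρ.map g) ≤ ∫⁻ a, ENNReal.ofReal |f a - g a| ∂ρ := by
  rw [← lintegral_measure_symmDiff_setOf_le ρ hf hg]
  refine lintegral_mono fun t => ?_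
  rw [map_measureReal_apply hf measurableSet_Iic, map_measureReal_apply hg measurableSet_Iic,
    ← ofReal_measureReal]
  exact ENNReal.ofReal_le_ofReal <| abs_measureReal_sub_le_measureReal_symmDiff
    (hf measurableSet_Iic).nullMeasurableSet (hg measurableSet_Iic).nullMeasurableSet

lemma W1_map_le (ρ : Measure α) {f g : α → ℝ} (hf : Measurable f) (hg : Measurable g) :
    W1 (ρ.map f) (ρ.map g) ≤ (∫⁻ a, ENNReal.ofReal |f a - g a| ∂ρ).toReal := by
  have hfg : Measurable fun a => (f a, g a) := hf.prodMk hg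
  let π : {π : Measure (ℝ × ℝ) // π.map Prod.fst = ρ.map f ∧ π.map Prod.snd = ρ.map g} :=
    ⟨ρ.map fun a => (f a, g a), by rw [Measure.map_map measurable_fst hfg]; rfl,
      by rw [Measure.map_map measurable_snd hfg]; rfl⟩
  calc W1 (ρ.map f) (ρ.map g) ≤ ∫ p, |p.1 - p.2| ∂(π : Measure (ℝ × ℝ)) :=
        ciInf_le ⟨0, by rintro _ ⟨π, rfl⟩; exact integral_nonneg fun _ => abs_nonneg _⟩ π
    _ = ∫ a, |f a - g a| ∂ρ :=
        integral_map hfg.aemeasurable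
          (continuous_fst.sub continuous_snd).abs.aestronglyMeasurable
    _ = _ := integral_eq_lintegral_of_nonneg_ae (ae_of_all _ fun _ => abs_nonneg _)
        (hf.sub hg).abs.aestronglyMeasurable

lemma measureReal_symmDiff_eq_abs_sub {ρ : Measure α} [IsFiniteMeasure ρ] {s t : Set α}
    (hs : MeasurableSet s) (ht : MeasurableSet t) (hst : s ⊆ t ∨ t ⊆ s) :
    ρ.real (s ∆ t) = |ρ.real s - ρ.real t| := by
  rcases hst with h | h
  · rw [symmDiff_of_le h, measureReal_sdiff h hs, abs_sub_comm,
      abs_of_nonneg (sub_nonneg.2 (measureReal_mono h))]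
  · rw [symmDiff_of_ge h, measureReal_sdiff h ht, abs_of_nonneg (sub_nonneg.2 (measureReal_mono h))]

end Coupling

/-- The value off `(0, 1)` is arbitrary: only `volume.restrict (Ioo 0 1)` is ever used. -/
noncomputable def quantileFun (μ : Measure ℝ) (u : ℝ) : ℝ :=
  if u ∈ Ioo 0 1 then sInf {x | u ≤ cdf μ x} else 0

section Quantile

variable {μ : Measure ℝ}

lemma le_cdf_quantileFun {u : ℝ} (hu : u ∈ Ioo 0 1) : u ≤ cdf μ (quantileFun μ u) := by
  have hne : {x | u ≤ cdf μ x}.Nonempty :=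
    ((tendsto_cdf_atTop μ).eventually (eventually_ge_nhds hu.2)).exists
  rw [quantileFun, if_pos hu]
  have hgt : ∀ x ∈ Ioi (sInf {x | u ≤ cdf μ x}), u ≤ cdf μ x := fun x hx => by
    obtain ⟨y, hy, hyx⟩ := exists_lt_of_csInf_lt hne hx
    exact hy.trans (monotone_cdf μ hyx.le)
  exact ge_of_tendsto (((cdf μ).right_continuous _).tendsto.mono_left
    (nhdsWithin_mono _ Ioi_subset_Ici_self)) (eventually_nhdsWithin_of_forall hgt)

lemma quantileFun_le_iff {u t : ℝ} (hu : u ∈ Ioo 0 1) :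
    quantileFun μ u ≤ t ↔ u ≤ cdf μ t := by
  refine ⟨fun h => (le_cdf_quantileFun hu).trans (monotone_cdf μ h), fun h => ?_⟩
  obtain ⟨y, hy⟩ := ((tendsto_cdf_atBot μ).eventually (eventually_lt_nhds hu.1)).exists
  have hbdd : BddBelow {x | u ≤ cdf μ x} :=
    ⟨y, fun x hx => le_of_not_ge fun hxy => (hx.trans (monotone_cdf μ hxy)).not_gt hy⟩
  rw [quantileFun, if_pos hu]
  exact csInf_le hbdd h

lemma measurable_quantileFun : Measurable (quantileFun μ) := by
  refine measurable_of_Iic fun t => ?_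
  have : quantileFun μ ⁻¹' Iic t = Ioo 0 1 ∩ Iic (cdf μ t) ∪ (Ioo 0 1)ᶜ ∩ {_u | 0 ≤ t} := by
    ext u
    by_cases hu : u ∈ Ioo 0 1
    · simp [quantileFun_le_iff hu, hu]
    · simp [quantileFun, hu]
  rw [this]
  exact (measurableSet_Ioo.inter measurableSet_Iic).union
    (measurableSet_Ioo.compl.inter (MeasurableSet.const _))

lemma map_quantileFun [IsProbabilityMeasure μ] :
    (volume.restrict (Ioo 0 1)).map (quantileFun μ) = μ := by
  refine Measure.ext_of_Iic _ _ fun t => ?_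
  have hpre : quantileFun μ ⁻¹' Iic t ∩ Ioo 0 1 = Iic (cdf μ t) ∩ Ioo 0 1 := by
    ext u
    exact ⟨fun h => ⟨(quantileFun_le_iff h.2).1 h.1, h.2⟩,
      fun h => ⟨(quantileFun_le_iff h.2).2 h.1, h.2⟩⟩
  rw [Measure.map_apply measurable_quantileFun measurableSet_Iic,
    Measure.restrict_apply (measurable_quantileFun measurableSet_Iic), hpre, ← ofReal_cdf]
  refine le_antisymm ?_ ?_
  · calc volume (Iic (cdf μ t) ∩ Ioo 0 1) ≤ volume (Icc 0 (cdf μ t)) :=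
          measure_mono fun u hu => ⟨hu.2.1.le, hu.1⟩
      _ = ENNReal.ofReal (cdf μ t) := by rw [Real.volume_Icc, sub_zero]
  · calc ENNReal.ofReal (cdf μ t) = volume (Ioo 0 (cdf μ t)) := by rw [Real.volume_Ioo, sub_zero]
      _ ≤ volume (Iic (cdf μ t) ∩ Ioo 0 1) :=
          measure_mono fun u hu => ⟨hu.2.le, hu.1, hu.2.trans_le (cdf_le_one μ t)⟩

lemma setOf_quantileFun_le_subset {ν : Measure ℝ} {t : ℝ} (h : cdf μ t ≤ cdf ν t) :
    {u | quantileFun μ u ≤ t} ⊆ {u | quantileFun ν u ≤ t} := by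
  intro u hu
  by_cases h01 : u ∈ Ioo 0 1
  · exact (quantileFun_le_iff h01).2 (((quantileFun_le_iff h01).1 hu).trans h)
  · have hμu : quantileFun μ u ≤ t := hu
    change quantileFun ν u ≤ t
    rw [quantileFun, if_neg h01] at hμu ⊢
    exact hμu

end Quantile

lemma lintegral_abs_quantileFun_sub (μ ν : Measure ℝ) [IsProbabilityMeasure μ]
    [IsProbabilityMeasure ν] :
    ∫⁻ u in Ioo 0 1, ENNReal.ofReal |quantileFun μ u - quantileFun ν u| = cdfDist μ ν := by
  rw [← lintegral_measure_symmDiff_setOf_le _ measurable_quantileFun measurable_quantileFun]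
  refine lintegral_congr fun t => ?_
  have hreal (μ : Measure ℝ) [IsProbabilityMeasure μ] :
      (volume.restrict (Ioo 0 1)).real {u | quantileFun μ u ≤ t} = μ.real (Iic t) := by
    have := map_measureReal_apply (μ := volume.restrict (Ioo 0 1))
      (measurable_quantileFun (μ := μ)) (measurableSet_Iic (a := t))
    rw [map_quantileFun] at this
    exact this.symm
  rw [← ofReal_measureReal, measureReal_symmDiff_eq_abs_sub
    (measurableSet_le measurable_quantileFun measurable_const)
    (measurableSet_le measurable_quantileFun measurable_const)
    ((le_total _ _).imp setOf_quantileFun_le_subset setOf_quantileFun_le_subset), hreal, hreal]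

lemma W1_le_toReal_cdfDist (μ ν : Measure ℝ) [IsProbabilityMeasure μ] [IsProbabilityMeasure ν] :
    W1 μ ν ≤ (cdfDist μ ν).toReal := by
  simpa only [map_quantileFun, lintegral_abs_quantileFun_sub] using
    W1_map_le (volume.restrict (Ioo 0 1)) (measurable_quantileFun (μ := μ))
      (measurable_quantileFun (μ := ν))

noncomputable def uniformIcc (k : ℕ) : Measure ℕ :=
  (k : ℝ≥0∞)⁻¹ • ∑ j ∈ Finset.Icc 1 k, Measure.dirac j

lemma lintegral_uniformIcc (k : ℕ) (f : ℕ → ℝ≥0∞) :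
    ∫⁻ j, f j ∂uniformIcc k = (k : ℝ≥0∞)⁻¹ * ∑ j ∈ Finset.Icc 1 k, f j := by
  simp [uniformIcc, lintegral_finsetSum_measure]

lemma isProbabilityMeasure_uniformIcc {k : ℕ} (hk : k ≠ 0) :
    IsProbabilityMeasure (uniformIcc k) := by
  constructor
  rw [← setLIntegral_one, Measure.restrict_univ, lintegral_uniformIcc]
  simp [ENNReal.inv_mul_cancel, hk]

section Empirical

variable {Ω : Type*} [MeasurableSpace Ω]

lemma empiricalMeasure_eq_map (k : ℕ) (X : ℕ → Ω → ℝ) (ω : Ω) :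
    empiricalMeasure k X ω = (uniformIcc k).map fun j => X j ω := by
  simp [empiricalMeasure, uniformIcc, Measure.map_smul,
    Measure.map_finset_sum Measurable.of_discrete.aemeasurable]

lemma empiricalMeasure_real_Iic (k : ℕ) (X : ℕ → Ω → ℝ) (ω : Ω) (t : ℝ) :
    (empiricalMeasure k X ω).real (Iic t) =
      1 / (k : ℝ) * ∑ j ∈ Finset.Icc 1 k, if X j ω ≤ t then (1 : ℝ) else 0 := by
  simp [empiricalMeasure, measureReal_def, Measure.dirac_apply', indicator_apply]

lemma isProbabilityMeasure_empiricalMeasure {k : ℕ} (hk : k ≠ 0) (X : ℕ → Ω → ℝ) (ω : Ω) :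
    IsProbabilityMeasure (empiricalMeasure k X ω) := by
  have := isProbabilityMeasure_uniformIcc hk
  rw [empiricalMeasure_eq_map]
  exact Measure.isProbabilityMeasure_map Measurable.of_discrete.aemeasurable

lemma ae_empiricalMeasure_mem {k : ℕ} {s : Set ℝ} (hs : MeasurableSet s) {X : ℕ → Ω → ℝ} {ω : Ω}
    (h : ∀ j, X j ω ∈ s) : ∀ᵐ x ∂empiricalMeasure k X ω, x ∈ s := by
  rw [empiricalMeasure_eq_map, ae_map_iff (p := (· ∈ s)) Measurable.of_discrete.aemeasurable hs]
  exact ae_of_all _ h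

lemma cdfDist_empiricalMeasure_le {k : ℕ} (hk : k ≠ 0) (X Y : ℕ → Ω → ℝ) (ω : Ω) :
    cdfDist (empiricalMeasure k X ω) (empiricalMeasure k Y ω) ≤
      ENNReal.ofReal (1 / (k : ℝ) * ∑ j ∈ Finset.Icc 1 k, |X j ω - Y j ω|) := by
  have := isProbabilityMeasure_uniformIcc hk
  rw [empiricalMeasure_eq_map, empiricalMeasure_eq_map]
  refine (cdfDist_map_le _ Measurable.of_discrete Measurable.of_discrete).trans_eq ?_
  rw [lintegral_uniformIcc, ENNReal.ofReal_mul (by positivity),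
    ENNReal.ofReal_sum_of_nonneg fun _ _ => abs_nonneg _, one_div,
    ENNReal.ofReal_inv_of_pos (by positivity), ENNReal.ofReal_natCast]

end Empirical

lemma trunc_mem_Icc (M x : ℝ) : trunc M x ∈ Icc (-|M|) |M| :=
  ⟨(neg_le_neg (le_abs_self M)).trans (le_max_right _ _),
    max_le ((min_le_right x M).trans (le_abs_self M)) (neg_le_abs M)⟩

lemma continuous_trunc (M : ℝ) : Continuous (trunc M) := by
  unfold trunc
  fun_prop

lemma cdfDist_map_trunc_le (μ : Measure ℝ) [IsFiniteMeasure μ]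
    (hint : Integrable (fun x => x) μ) (M : ℝ) :
    cdfDist (μ.map (trunc M)) μ ≤ ENNReal.ofReal (∫ x, |x - trunc M x| ∂μ) := by
  have htrunc : Integrable (trunc M) μ :=
    .of_bound (continuous_trunc M).aestronglyMeasurable |M|
      (ae_of_all _ fun x => abs_le.2 (trunc_mem_Icc M x))
  rw [ofReal_integral_eq_lintegral_ofReal (f := fun x => |x - trunc M x|) (hint.sub htrunc).abs
    (ae_of_all _ fun _ => abs_nonneg _)]
  simpa [abs_sub_comm] using cdfDist_map_le μ (continuous_trunc M).measurable measurable_id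

lemma cdfDist_empiricalMeasure_trunc_ne_top {Ω : Type*} [MeasurableSpace Ω] (μ : Measure ℝ)
    [IsProbabilityMeasure μ] (M : ℝ) {k : ℕ} (hk : k ≠ 0) (X : ℕ → Ω → ℝ) (ω : Ω) :
    cdfDist (empiricalMeasure k (fun j ω => trunc M (X j ω)) ω) (μ.map (trunc M)) ≠ ∞ := by
  have := isProbabilityMeasure_empiricalMeasure hk (fun j ω => trunc M (X j ω)) ω
  have := Measure.isProbabilityMeasure_map (μ := μ) (continuous_trunc M).measurable.aemeasurable
  refine ne_top_of_le_ne_top ENNReal.ofReal_ne_top (cdfDist_le_of_ae_mem_Icc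
    (ae_empiricalMeasure_mem measurableSet_Icc fun j => trunc_mem_Icc M _) ?_)
  exact (ae_map_iff (p := (· ∈ Icc (-|M|) |M|)) (continuous_trunc M).measurable.aemeasurable
    measurableSet_Icc).2 (ae_of_all _ (trunc_mem_Icc M))

theorem W1_empiricalMeasure_le {Ω : Type*} [MeasurableSpace Ω] (μ : Measure ℝ)
    [IsProbabilityMeasure μ] (hint : Integrable (fun x => x) μ) (M : ℝ) {k : ℕ} (hk : k ≠ 0)
    (X : ℕ → Ω → ℝ) (ω : Ω) :
    W1 (empiricalMeasure k X ω) μ ≤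
      (∫ t, |(1 / (k : ℝ)) * ∑ j ∈ Finset.Icc 1 k,
          (if trunc M (X j ω) ≤ t then (1 : ℝ) else 0)
        - ((μ.map (fun x => trunc M x)) (Iic t)).toReal|)
      + 1 / (k : ℝ) * ∑ j ∈ Finset.Icc 1 k, |X j ω - trunc M (X j ω)|
      + ∫ x, |x - trunc M x| ∂μ := by
  set μk := empiricalMeasure k X ω
  set μk' := empiricalMeasure k (fun j ω => trunc M (X j ω)) ω
  set μ' := μ.map (trunc M)
  have := isProbabilityMeasure_empiricalMeasure hk X ω
  have := isProbabilityMeasure_empiricalMeasure hk (fun j ω => trunc M (X j ω)) ω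
  have h₁ := cdfDist_empiricalMeasure_le hk X (fun j ω => trunc M (X j ω)) ω
  have h₂ : (cdfDist μk' μ').toReal = ∫ t, |(1 / (k : ℝ)) * ∑ j ∈ Finset.Icc 1 k,
      (if trunc M (X j ω) ≤ t then (1 : ℝ) else 0) - (μ' (Iic t)).toReal| := by
    simp only [toReal_cdfDist, μk', empiricalMeasure_real_Iic]
    rfl
  have h₃ := cdfDist_map_trunc_le μ hint M
  have hne₁ := ne_top_of_le_ne_top ENNReal.ofReal_ne_top h₁
  have hne₂ := cdfDist_empiricalMeasure_trunc_ne_top μ M hk X ω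
  have hne₃ := ne_top_of_le_ne_top ENNReal.ofReal_ne_top h₃
  calc W1 μk μ ≤ (cdfDist μk μ).toReal := W1_le_toReal_cdfDist μk μ
    _ ≤ (cdfDist μk' μ' + cdfDist μk μk' + cdfDist μ' μ).toReal := by
        refine ENNReal.toReal_mono (by finiteness) ?_
        calc cdfDist μk μ ≤ cdfDist μk μk' + cdfDist μk' μ' + cdfDist μ' μ :=
              (cdfDist_triangle _ μ' _).trans (by gcongr; exact cdfDist_triangle _ _ _)
          _ = cdfDist μk' μ' + cdfDist μk μk' + cdfDist μ' μ := by ring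
    _ = (cdfDist μk' μ').toReal + (cdfDist μk μk').toReal + (cdfDist μ' μ).toReal := by
        rw [ENNReal.toReal_add (by finiteness) hne₃, ENNReal.toReal_add hne₂ hne₁]
    _ ≤ _ := by
        rw [h₂]
        gcongr
        · exact ENNReal.toReal_le_of_le_ofReal (by positivity) h₁
        · exact ENNReal.toReal_le_of_le_ofReal (integral_nonneg fun _ => abs_nonneg _) h₃

lemma mul_W1_empiricalMeasure_le {Ω : Type*} [MeasurableSpace Ω] (μ : Measure ℝ)
    [IsProbabilityMeasure μ] (hint : Integrable (fun x => x) μ) (M : ℝ) {k : ℕ} (hk : k ≠ 0)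
    (X : ℕ → Ω → ℝ) (ω : Ω) :
    k * W1 (empiricalMeasure k X ω) μ ≤
      k * (∫ t, |(1 / (k : ℝ)) * ∑ j ∈ Finset.Icc 1 k,
          (if trunc M (X j ω) ≤ t then (1 : ℝ) else 0)
        - ((μ.map (fun x => trunc M x)) (Iic t)).toReal|)
      + ∑ j ∈ Finset.Icc 1 k, (|X j ω - trunc M (X j ω)| + ∫ x, |x - trunc M x| ∂μ) := by
  refine (mul_le_mul_of_nonneg_left (W1_empiricalMeasure_le μ hint M hk X ω)
    k.cast_nonneg).trans (le_of_eq ?_)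
  simp only [Finset.sum_add_distrib, Finset.sum_const, Nat.card_Icc, nsmul_eq_mul]
  field_simp
  push_cast
  ring

lemma biSup_le_biSup_add {ι : Type*} {s : Finset ι} {f g : ι → ℝ} {c : ℝ}
    (hg : ∀ i ∈ s, 0 ≤ g i) (hc : 0 ≤ c) (h : ∀ i ∈ s, f i ≤ g i + c) :
    ⨆ i ∈ s, f i ≤ (⨆ i ∈ s, g i) + c := by
  have hbdd : BddAbove (⋃ i, range fun _ : i ∈ s => g i) :=
    (s.finite_toSet.image g).bddAbove.mono
      (iUnion_subset fun i => range_subset_iff.2 fun hi => mem_image_of_mem g hi)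
  have hnonneg : 0 ≤ (⨆ i ∈ s, g i) + c :=
    add_nonneg (Real.iSup_nonneg fun i => Real.iSup_nonneg fun hi => hg i hi) hc
  refine Real.iSup_le (fun i => Real.iSup_le (fun hi => ?_) hnonneg) hnonneg
  exact (h i hi).trans (by gcongr; exact le_ciSup₂ (f := fun i (_ : i ∈ s) => g i) hbdd i hi)

theorem max_kW1_le_truncated_general {Ω : Type*} [MeasurableSpace Ω] (P : Measure Ω)
    [IsProbabilityMeasure P] (X : ℕ → Ω → ℝ) (hmeas : ∀ i, Measurable (X i))
    (μ : Measure ℝ) (hid : ∀ i, Measure.map (X i) P = μ)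
    (hint : Integrable (fun x => x) μ) (M : ℝ) (n : ℕ) :
    ∀ᵐ ω ∂P,
      (⨆ k ∈ Finset.Icc 1 n, (k : ℝ) * W1 (empiricalMeasure k X ω) μ) ≤
        (⨆ k ∈ Finset.Icc 1 n, (k : ℝ) *
          ∫ t, |(1 / (k : ℝ)) * ∑ j ∈ Finset.Icc 1 k,
              (if trunc M (X j ω) ≤ t then (1 : ℝ) else 0)
            - ((μ.map (fun x => trunc M x)) (Set.Iic t)).toReal|)
        + ∑ i ∈ Finset.Icc 1 n,
            (|X i ω - trunc M (X i ω)| + ∫ ω', |X i ω' - trunc M (X i ω')| ∂P) := by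
  have : IsProbabilityMeasure μ := hid 1 ▸ Measure.isProbabilityMeasure_map (hmeas 1).aemeasurable
  have hE (i : ℕ) : ∫ ω', |X i ω' - trunc M (X i ω')| ∂P = ∫ x, |x - trunc M x| ∂μ := by
    rw [← hid i, integral_map (f := fun x => |x - trunc M x|) (hmeas i).aemeasurable
      (continuous_id.sub (continuous_trunc M)).abs.aestronglyMeasurable]
  refine ae_of_all _ fun ω => biSup_le_biSup_add (fun k _ => by positivity)
    (Finset.sum_nonneg fun i _ => by positivity) fun k hk => ?_
  obtain ⟨hk₁, hkn⟩ := Finset.mem_Icc.1 hk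
  refine (mul_W1_empiricalMeasure_le μ hint M (by omega) X ω).trans (add_le_add le_rfl ?_)
  simp only [hE]
  exact Finset.sum_le_sum_of_subset_of_nonneg (Finset.Icc_subset_Icc_right hkn)
    fun _ _ _ => by positivity

/-- Truncation decomposition of `max_{1 ≤ k ≤ n} k W₁(μ_k, μ)`:
it is bounded by the maximal deviation of the empirical distribution function of the
truncated variables, plus the sum of the truncation remainders and their expectations. -/
theorem max_kW1_le_truncated {Ω : Type*} [MeasurableSpace Ω] (P : Measure Ω)
    [IsProbabilityMeasure P] (X : ℕ → Ω → ℝ) (hmeas : ∀ i, Measurable (X i))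
    (μ : Measure ℝ) (hid : ∀ i, Measure.map (X i) P = μ)
    (hint : Integrable (fun x => x) μ) (M : ℝ) (hM : 0 < M) (n : ℕ) :
    ∀ᵐ ω ∂P,
      (⨆ k ∈ Finset.Icc 1 n, (k : ℝ) * W1 (empiricalMeasure k X ω) μ) ≤
        (⨆ k ∈ Finset.Icc 1 n, (k : ℝ) *
          ∫ t, |(1 / (k : ℝ)) * ∑ j ∈ Finset.Icc 1 k,
              (if trunc M (X j ω) ≤ t then (1 : ℝ) else 0)
            - ((μ.map (fun x => trunc M x)) (Set.Iic t)).toReal|)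
        + ∑ i ∈ Finset.Icc 1 n,
            (|X i ω - trunc M (X i ω)| + ∫ ω', |X i ω' - trunc M (X i ω')| ∂P) :=
  max_kW1_le_truncated_general P X hmeas μ hid hint M n
end

section
/- Let (X_i) be a strictly stationary sequence with mixing coefficients α(k), tail function H(t) = P(|X₀| > t), and let X_i' = (X_i ∧ M) ∨ (−M) with M = Q(v) for some v ∈ (0,1], where Q is the generalized inverse of H. Then ∫_{−M}^{M} ( Var(∑_{i=1}^q 1_{X_i' ≤ t}) )^{1/2} dt ≤ 2√2 · √q · ∫_0^∞ ( ∑_{k=0}^{q−1} min(α(k), H(t)) )^{1/2} dt. -/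
open MeasureTheory

/-- The σ-algebra of the past, `σ(X_i, i ≤ 0)`. -/
def pastSigma {Ω : Type*} (X : ℤ → Ω → ℝ) : MeasurableSpace Ω :=
  ⨆ i : {i : ℤ // i ≤ 0}, MeasurableSpace.comap (X i.1) (inferInstance : MeasurableSpace ℝ)

/-- The σ-algebra of the future, `σ(X_i, i ≥ k)`. -/
def futureSigma {Ω : Type*} (X : ℤ → Ω → ℝ) (k : ℤ) : MeasurableSpace Ω :=
  ⨆ i : {i : ℤ // k ≤ i}, MeasurableSpace.comap (X i.1) (inferInstance : MeasurableSpace ℝ)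

/-- Rosenblatt's strong mixing coefficients `α(k)`. -/
noncomputable def alphaMix {Ω : Type*} [MeasurableSpace Ω] (P : Measure Ω)
    (X : ℤ → Ω → ℝ) (k : ℕ) : ℝ :=
  sSup {r | ∃ A B : Set Ω, MeasurableSet[pastSigma X] A ∧
    MeasurableSet[futureSigma X k] B ∧
    r = |(P (A ∩ B)).toReal - (P A).toReal * (P B).toReal|}

/-- Strict stationarity: the finite dimensional distributions are shift invariant. -/
def IsStrictlyStationary {Ω : Type*} [MeasurableSpace Ω] (P : Measure Ω)
    (X : ℤ → Ω → ℝ) : Prop :=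
  ∀ (m : ℕ) (ind : Fin m → ℤ) (h : ℤ),
    Measure.map (fun ω j => X (ind j + h) ω) P = Measure.map (fun ω j => X (ind j) ω) P

/-! For a level `t`, the variance of `∑ᵢ 1{X'ᵢ ≤ t}` is the double sum of the covariances of
the events `{X'ᵢ ≤ t}`. By stationarity the `(i, j)` covariance is that of lag `|j - i|`, so it is
bounded both by `α(|j - i|)` and by `min(p, 1 - p)` with `p = P(X'₀ ≤ t)`; as `|X'₀| ≤ |X₀|`, the
latter is at most `H(|t|)` except at the countably many atoms of `|X₀|`. Each lag occurs at most
`2q` times, so `Var ≤ 2q ∑_{k<q} min(α(k), H(|t|))`, and integrating the square root of this even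
function over `[-M, M]` costs at most twice its integral over `(0, ∞)`. -/

open ProbabilityTheory Finset

lemma measurable_trunc (M : ℝ) : Measurable (trunc M) :=
  (measurable_id.min measurable_const).max measurable_const

lemma abs_trunc_le {M : ℝ} (hM : 0 ≤ M) (x : ℝ) : |trunc M x| ≤ |x| := by
  unfold trunc
  grind [abs_le]

lemma ae_measure_level_set_eq_zero {α β : Type*} [MeasurableSpace α] [MeasurableSpace β]
    [MeasurableSingletonClass β] {μ : Measure α} [SFinite μ] (ν : Measure β) [NullSingletonClass ν]
    {g : α → β} (hg : Measurable g) : ∀ᵐ b ∂ν, μ {a | g a = b} = 0 :=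
  ae_iff.2 <| measure_mono_null (fun _ hb => pos_iff_ne_zero.2 hb)
    ((Measure.countable_meas_level_set_pos (μ := μ) hg).measure_zero ν)

section Events

variable {Ω : Type*} [MeasurableSpace Ω] (P : Measure Ω) [IsProbabilityMeasure P]

lemma abs_measureReal_inter_sub_mul_le_one (A B : Set Ω) :
    |P.real (A ∩ B) - P.real A * P.real B| ≤ 1 :=
  abs_sub_le_of_nonneg_of_le measureReal_nonneg measureReal_le_one
    (mul_nonneg measureReal_nonneg measureReal_nonneg)
    (mul_le_one₀ measureReal_le_one measureReal_nonneg measureReal_le_one)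

lemma abs_measureReal_inter_sub_mul_le_min (A : Set Ω) {B : Set Ω} (hB : MeasurableSet B) :
    |P.real (A ∩ B) - P.real A * P.real B| ≤ min (P.real A) (1 - P.real A) := by
  have hle_A : P.real (A ∩ B) ≤ P.real A := measureReal_mono Set.inter_subset_left
  have hle_B : P.real (A ∩ B) ≤ P.real B := measureReal_mono Set.inter_subset_right
  have hunion : P.real (A ∪ B) + P.real (A ∩ B) = P.real A + P.real B :=
    measureReal_union_add_inter hB
  have hunion_le : P.real (A ∪ B) ≤ 1 := measureReal_le_one
  have hB_le : P.real B ≤ 1 := measureReal_le_one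
  have hinter_nonneg : 0 ≤ P.real (A ∩ B) := measureReal_nonneg
  have hB_nonneg : 0 ≤ P.real B := measureReal_nonneg
  refine le_min (abs_le.2 ⟨?_, ?_⟩) (abs_le.2 ⟨?_, ?_⟩) <;> nlinarith

lemma covariance_indicator_one {A B : Set Ω} (hA : MeasurableSet A) (hB : MeasurableSet B) :
    cov[A.indicator 1, B.indicator 1; P] = P.real (A ∩ B) - P.real A * P.real B := by
  have h1 : MemLp (1 : Ω → ℝ) 2 P := memLp_const 1
  rw [covariance_eq_sub (h1.indicator hA) (h1.indicator hB),
    ← Set.inter_indicator_one, integral_indicator_one hA, integral_indicator_one hB,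
    integral_indicator_one (hA.inter hB)]

lemma variance_sum_indicator_one {ι : Type*} (s : Finset ι) {A : ι → Set Ω}
    (hA : ∀ i, MeasurableSet (A i)) :
    Var[fun ω => ∑ i ∈ s, (A i).indicator 1 ω; P]
      = ∑ i ∈ s, ∑ j ∈ s, (P.real (A i ∩ A j) - P.real (A i) * P.real (A j)) := by
  have h1 : MemLp (1 : Ω → ℝ) 2 P := memLp_const 1
  rw [variance_fun_sum' fun i _ => h1.indicator (hA i)]
  exact sum_congr rfl fun i _ => sum_congr rfl fun j _ => covariance_indicator_one P (hA i) (hA j)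

lemma min_measureReal_trunc_le_le_tail {M t : ℝ} (hM : 0 ≤ M) {Y : Ω → ℝ} (hY : Measurable Y)
    (hatom : P {ω | |Y ω| = -t} = 0) :
    min (P.real (Y ⁻¹' {x | trunc M x ≤ t})) (1 - P.real (Y ⁻¹' {x | trunc M x ≤ t}))
      ≤ P.real {ω | |t| < |Y ω|} := by
  have hS : MeasurableSet {x | trunc M x ≤ t} := measurable_trunc M measurableSet_Iic
  rcases le_or_gt 0 t with ht | ht
  · rw [abs_of_nonneg ht, ← probReal_compl_eq_one_sub (hY hS)]
    refine (min_le_right _ _).trans (measureReal_mono fun ω hω => ?_)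
    simp only [Set.mem_compl_iff, Set.mem_preimage, Set.mem_ofPred_eq, not_le] at hω ⊢
    exact hω.trans_le ((le_abs_self _).trans (abs_trunc_le hM _))
  · rw [abs_of_neg ht]
    refine (min_le_left _ _).trans ?_
    calc P.real (Y ⁻¹' {x | trunc M x ≤ t})
        ≤ P.real ({ω | -t < |Y ω|} ∪ {ω | |Y ω| = -t}) := by
          refine measureReal_mono fun ω hω => ?_
          have : -t ≤ |Y ω| := (neg_le_neg hω).trans ((neg_le_abs _).trans (abs_trunc_le hM _))
          exact this.lt_or_eq.imp id Eq.symm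
      _ ≤ P.real {ω | -t < |Y ω|} + P.real {ω | |Y ω| = -t} := measureReal_union_le _ _
      _ = P.real {ω | -t < |Y ω|} := by simp [Measure.real, hatom]

end Events

lemma sum_sum_natAbs_sub_le (q : ℕ) {g : ℕ → ℝ} (hg : ∀ k, 0 ≤ g k) :
    ∑ i ∈ Finset.Icc (1 : ℤ) q, ∑ j ∈ Finset.Icc (1 : ℤ) q, g (j - i).natAbs
      ≤ 2 * q * ∑ k ∈ range q, g k := by
  have hrow : ∀ i ∈ Finset.Icc (1 : ℤ) q,
      ∑ j ∈ Finset.Icc (1 : ℤ) q, g (j - i).natAbs ≤ 2 * ∑ k ∈ range q, g k := by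
    intro i hi
    have hmaps : ∀ j ∈ Finset.Icc (1 : ℤ) q, (j - i).natAbs ∈ range q := by
      intro j hj
      simp only [Finset.mem_Icc, mem_range] at hi hj ⊢
      omega
    rw [← sum_fiberwise_of_maps_to hmaps, mul_sum]
    refine sum_le_sum fun k _ => ?_
    have hfiber : {j ∈ Finset.Icc (1 : ℤ) q | (j - i).natAbs = k} ⊆ {i + k, i - k} := by
      intro j
      simp only [mem_filter, mem_insert, mem_singleton]
      omega
    calc ∑ j ∈ Finset.Icc (1 : ℤ) q with (j - i).natAbs = k, g (j - i).natAbs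
        = #{j ∈ Finset.Icc (1 : ℤ) q | (j - i).natAbs = k} * g k := by
          rw [sum_congr rfl fun j hj => by rw [(mem_filter.1 hj).2], sum_const, nsmul_eq_mul]
      _ ≤ 2 * g k := by
          gcongr
          · exact hg k
          · exact_mod_cast (card_le_card hfiber).trans card_le_two
  calc _ ≤ ∑ _i ∈ Finset.Icc (1 : ℤ) q, 2 * ∑ k ∈ range q, g k := sum_le_sum hrow
    _ = 2 * q * ∑ k ∈ range q, g k := by
      rw [sum_const, Int.card_Icc, add_sub_cancel_right, Int.toNat_natCast, nsmul_eq_mul]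
      ring

section Mixing

variable {Ω : Type*} {X : ℤ → Ω → ℝ}

lemma measurableSet_pastSigma_preimage {i : ℤ} (hi : i ≤ 0) {S : Set ℝ} (hS : MeasurableSet S) :
    MeasurableSet[pastSigma X] (X i ⁻¹' S) :=
  le_iSup (fun i : {i : ℤ // i ≤ 0} => MeasurableSpace.comap (X i.1) _) ⟨i, hi⟩ _ ⟨S, hS, rfl⟩

lemma measurableSet_futureSigma_preimage {k i : ℤ} (hi : k ≤ i) {S : Set ℝ}
    (hS : MeasurableSet S) : MeasurableSet[futureSigma X k] (X i ⁻¹' S) :=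
  le_iSup (fun i : {i : ℤ // k ≤ i} => MeasurableSpace.comap (X i.1) _) ⟨i, hi⟩ _ ⟨S, hS, rfl⟩

variable [MeasurableSpace Ω] {P : Measure Ω}

lemma IsStrictlyStationary.measureReal_preimage_inter_add
    (hstat : IsStrictlyStationary P X) (hmeas : ∀ i, Measurable (X i)) {S T : Set ℝ}
    (hS : MeasurableSet S) (hT : MeasurableSet T) (i j h : ℤ) :
    P.real (X (i + h) ⁻¹' S ∩ X (j + h) ⁻¹' T) = P.real (X i ⁻¹' S ∩ X j ⁻¹' T) := by
  have hE : MeasurableSet {p : Fin 2 → ℝ | p 0 ∈ S ∧ p 1 ∈ T} :=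
    (measurable_pi_apply 0 hS).inter (measurable_pi_apply 1 hT)
  have hmap := congrArg (fun μ : Measure (Fin 2 → ℝ) => μ.real {p | p 0 ∈ S ∧ p 1 ∈ T})
    (hstat 2 ![i, j] h)
  simp only [map_measureReal_apply (measurable_pi_lambda _ fun _ => hmeas _) hE] at hmap
  exact hmap

lemma IsStrictlyStationary.measureReal_preimage_add
    (hstat : IsStrictlyStationary P X) (hmeas : ∀ i, Measurable (X i)) {S : Set ℝ}
    (hS : MeasurableSet S) (i h : ℤ) : P.real (X (i + h) ⁻¹' S) = P.real (X i ⁻¹' S) := by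
  simpa using hstat.measureReal_preimage_inter_add hmeas hS hS i i h

variable [IsProbabilityMeasure P]

lemma abs_measureReal_inter_sub_mul_le_alphaMix {k : ℕ} {A B : Set Ω}
    (hA : MeasurableSet[pastSigma X] A) (hB : MeasurableSet[futureSigma X k] B) :
    |P.real (A ∩ B) - P.real A * P.real B| ≤ alphaMix P X k :=
  le_csSup ⟨1, by rintro _ ⟨A, B, -, -, rfl⟩; exact abs_measureReal_inter_sub_mul_le_one P A B⟩
    ⟨A, B, hA, hB, rfl⟩

lemma alphaMix_nonneg (k : ℕ) : 0 ≤ alphaMix P X k :=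
  (abs_nonneg _).trans (abs_measureReal_inter_sub_mul_le_alphaMix
    (@MeasurableSet.empty _ (pastSigma X)) (@MeasurableSet.empty _ (futureSigma X k)))

lemma IsStrictlyStationary.abs_measureReal_preimage_inter_sub_mul_le
    (hstat : IsStrictlyStationary P X) (hmeas : ∀ i, Measurable (X i)) {S : Set ℝ}
    (hS : MeasurableSet S) (i j : ℤ) :
    |P.real (X i ⁻¹' S ∩ X j ⁻¹' S) - P.real (X i ⁻¹' S) * P.real (X j ⁻¹' S)|
      ≤ min (alphaMix P X (j - i).natAbs)
          (min (P.real (X 0 ⁻¹' S)) (1 - P.real (X 0 ⁻¹' S))) := by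
  wlog hij : i ≤ j generalizing i j
  · rw [Set.inter_comm, mul_comm, ← Int.natAbs_neg, neg_sub]
    exact this j i (by omega)
  obtain ⟨k, rfl⟩ : ∃ k : ℕ, j = i + k := ⟨(j - i).toNat, by omega⟩
  have hjoint := hstat.measureReal_preimage_inter_add hmeas hS hS 0 k i
  have hfirst := hstat.measureReal_preimage_add hmeas hS 0 i
  have hsecond := hstat.measureReal_preimage_add hmeas hS k i
  rw [zero_add] at hjoint hfirst
  rw [add_comm (k : ℤ)] at hjoint hsecond
  rw [hjoint, hfirst, hsecond, add_sub_cancel_left, Int.natAbs_natCast]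
  exact le_min
    (abs_measureReal_inter_sub_mul_le_alphaMix (measurableSet_pastSigma_preimage le_rfl hS)
      (measurableSet_futureSigma_preimage le_rfl hS))
    (abs_measureReal_inter_sub_mul_le_min P _ (hmeas k hS))

theorem IsStrictlyStationary.variance_sum_indicator_trunc_le (hstat : IsStrictlyStationary P X)
    (hmeas : ∀ i, Measurable (X i)) {M t : ℝ} (hM : 0 ≤ M) (hatom : P {ω | |X 0 ω| = -t} = 0)
    (q : ℕ) :
    Var[fun ω => ∑ i ∈ Finset.Icc (1 : ℤ) q, if trunc M (X i ω) ≤ t then (1 : ℝ) else 0; P]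
      ≤ 2 * q * ∑ k ∈ range q, min (alphaMix P X k) (P.real {ω | |t| < |X 0 ω|}) := by
  set S : Set ℝ := {x | trunc M x ≤ t}
  have hS : MeasurableSet S := measurable_trunc M measurableSet_Iic
  have hind : (fun ω => ∑ i ∈ Finset.Icc (1 : ℤ) q, if trunc M (X i ω) ≤ t then (1 : ℝ) else 0)
      = fun ω => ∑ i ∈ Finset.Icc (1 : ℤ) q, (X i ⁻¹' S).indicator 1 ω := by
    ext ω
    simp [S, Set.indicator_apply]
  rw [hind, variance_sum_indicator_one P _ fun i => hmeas i hS]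
  refine (sum_le_sum fun i _ => sum_le_sum fun j _ => ?_).trans
    (sum_sum_natAbs_sub_le q fun k => le_min (alphaMix_nonneg k) measureReal_nonneg)
  exact (le_abs_self _).trans
    ((hstat.abs_measureReal_preimage_inter_sub_mul_le hmeas hS i j).trans
      (min_le_min_left _ (min_measureReal_trunc_le_le_tail P hM (hmeas 0) hatom)))

end Mixing

lemma integrable_comp_abs {f : ℝ → ℝ} (hf : IntegrableOn f (Set.Ioi 0)) :
    Integrable fun x => f |x| := by
  have hIoi : IntegrableOn (fun x => f |x|) (Set.Ioi 0) :=
    hf.congr_fun (fun x hx => by rw [abs_of_pos hx]) measurableSet_Ioi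
  have hIic : IntegrableOn (fun x => f |x|) (Set.Iic 0) := by
    have hneg : MeasurableEmbedding fun x : ℝ => -x := (Homeomorph.neg ℝ).measurableEmbedding
    rw [← Measure.map_neg_eq_self (volume : Measure ℝ), hneg.integrableOn_map_iff]
    simp_rw [Function.comp_def, abs_neg, Set.neg_preimage, Set.neg_Iic, neg_zero]
    exact (integrableOn_Ici_iff_integrableOn_Ioi).mpr hIoi
  simpa using hIic.union hIoi

lemma setIntegral_comp_abs_le {f : ℝ → ℝ} (hf0 : ∀ x, 0 ≤ f x)
    (hf : IntegrableOn f (Set.Ioi 0)) (s : Set ℝ) :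
    ∫ x in s, f |x| ≤ 2 * ∫ x in Set.Ioi 0, f x :=
  (setIntegral_le_integral (integrable_comp_abs hf) (.of_forall fun _ => hf0 _)).trans_eq
    integral_comp_abs

theorem integral_sqrt_variance_le_mixing_general {Ω : Type*} [MeasurableSpace Ω]
    (P : Measure Ω) [IsProbabilityMeasure P] (X : ℤ → Ω → ℝ)
    (hmeas : ∀ i, Measurable (X i)) (hstat : IsStrictlyStationary P X)
    (H Q : ℝ → ℝ)
    (hH : ∀ t, H t = (P {ω | t < |X 0 ω|}).toReal)
    (v : ℝ) (q : ℕ)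
    (hV : IntegrableOn
      (fun t => Real.sqrt (∑ k ∈ Finset.range q, min (alphaMix P X k) (H t)))
      (Set.Ioi 0)) :
    ∫ t in Set.Icc (-(Q v)) (Q v),
        Real.sqrt (ProbabilityTheory.variance
          (fun ω => ∑ i ∈ Finset.Icc (1 : ℤ) q,
            (if trunc (Q v) (X i ω) ≤ t then (1 : ℝ) else 0)) P)
      ≤ 2 * Real.sqrt 2 * Real.sqrt q *
          ∫ t in Set.Ioi 0,
            Real.sqrt (∑ k ∈ Finset.range q, min (alphaMix P X k) (H t)) := by
  set φ : ℝ → ℝ := fun u => √(∑ k ∈ range q, min (alphaMix P X k) (H u))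
  have hatoms : ∀ᵐ t ∂volume, P {ω | |X 0 ω| = -t} = 0 := by
    filter_upwards [ae_measure_level_set_eq_zero (μ := P) volume (hmeas 0).abs.neg] with t ht
    simpa only [Pi.neg_apply, neg_eq_iff_eq_neg] using ht
  have hbound : ∀ᵐ t ∂volume.restrict (Set.Icc (-Q v) (Q v)),
      √(Var[fun ω => ∑ i ∈ Finset.Icc (1 : ℤ) q,
        if trunc (Q v) (X i ω) ≤ t then (1 : ℝ) else 0; P]) ≤ √(2 * q) * φ |t| := by
    filter_upwards [ae_restrict_mem measurableSet_Icc, ae_restrict_of_ae hatoms]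
      with t ht hatom
    have hM : 0 ≤ Q v := by linarith [ht.1, ht.2]
    rw [← Real.sqrt_mul (by positivity), hH]
    exact Real.sqrt_le_sqrt (hstat.variance_sum_indicator_trunc_le hmeas hM hatom q)
  calc _ ≤ ∫ t in Set.Icc (-Q v) (Q v), √(2 * q) * φ |t| :=
        integral_mono_of_nonneg (.of_forall fun _ => Real.sqrt_nonneg _)
          ((integrable_comp_abs hV).integrableOn.const_mul _) hbound
    _ = √(2 * q) * ∫ t in Set.Icc (-Q v) (Q v), φ |t| := integral_const_mul _ _
    _ ≤ √(2 * q) * (2 * ∫ t in Set.Ioi 0, φ t) := by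
        gcongr
        exact setIntegral_comp_abs_le (fun _ => Real.sqrt_nonneg _) hV _
    _ = _ := by
        rw [Real.sqrt_mul zero_le_two]
        ring

/-- `∫_{-M}^{M} (Var ∑_{i=1}^q 1_{X_i' ≤ t})^{1/2} dt
  ≤ 2√2 √q ∫_0^∞ (∑_{k=0}^{q-1} min(α(k), H(t)))^{1/2} dt`, with `M = Q(v)`. -/
theorem integral_sqrt_variance_le_mixing {Ω : Type*} [MeasurableSpace Ω]
    (P : Measure Ω) [IsProbabilityMeasure P] (X : ℤ → Ω → ℝ)
    (hmeas : ∀ i, Measurable (X i)) (hstat : IsStrictlyStationary P X)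
    (H Q : ℝ → ℝ)
    (hH : ∀ t, H t = (P {ω | t < |X 0 ω|}).toReal)
    (hQ : ∀ u, Q u = sInf {t | 0 ≤ t ∧ H t ≤ u})
    (v : ℝ) (hv : v ∈ Set.Ioc (0 : ℝ) 1) (q : ℕ) (hq : 1 ≤ q)
    (hV : IntegrableOn
      (fun t => Real.sqrt (∑ k ∈ Finset.range q, min (alphaMix P X k) (H t)))
      (Set.Ioi 0)) :
    ∫ t in Set.Icc (-(Q v)) (Q v),
        Real.sqrt (ProbabilityTheory.variance
          (fun ω => ∑ i ∈ Finset.Icc (1 : ℤ) q,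
            (if trunc (Q v) (X i ω) ≤ t then (1 : ℝ) else 0)) P)
      ≤ 2 * Real.sqrt 2 * Real.sqrt q *
          ∫ t in Set.Ioi 0,
            Real.sqrt (∑ k ∈ Finset.range q, min (alphaMix P X k) (H t)) :=
  integral_sqrt_variance_le_mixing_general P X hmeas hstat H Q hH v q hV
end
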